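/- Let f : ℕ → ℝ be defined by f(0) = 1, f(1) = 5/6, and f(d) = 2/(d+1) for d ≥ 2. Then every graph G has an induced linear forest with at least ∑_{v ∈ V(G)} f(d(v)) vertices, where d(v) denotes the degree of v in G. -/

import Mathlib

set_option linter.unusedSectionVars false
set_option linter.unreachableTactic false
set_option linter.unnecessarySeqFocus false
set_option linter.unusedTactic false
set_option maxHeartbeats 2000000

/-- A graph is a linear forest if it is acyclic and every vertex has degree at most 2
(equivalently, every connected component is a path; a single vertex counts as a path). -/
def IsLinearForest {α : Type*} (H : SimpleGraph α) : Prop :=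
  H.IsAcyclic ∧ ∀ v, (H.neighborSet v).ncard ≤ 2

namespace LinForestAux

open SimpleGraph Finset

variable {V : Type} [Fintype V] [DecidableEq V]

/-! ### Cycles give two distinct neighbors, and a shedding criterion for acyclicity -/

lemma cycle_two_nbrs_start {H : SimpleGraph V} {y : V} {c : H.Walk y y} (hc : c.IsCycle) :
    ∃ u w, u ∈ c.support ∧ w ∈ c.support ∧ u ≠ w ∧ H.Adj y u ∧ H.Adj y w := by
  cases c with
  | nil => exact absurd rfl hc.ne_nil
  | @cons _ b _ h p =>
    rw [SimpleGraph.Walk.cons_isCycle_iff] at hc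
    obtain ⟨hpath, hnotin⟩ := hc
    cases hpr : p.reverse with
    | nil => exact absurd rfl h.ne
    | @cons _ w _ h2 q =>
      refine ⟨b, w, ?_, ?_, ?_, h, h2⟩
      · simp [SimpleGraph.Walk.support_cons]
      · have hw : w ∈ p.reverse.support := by
          rw [hpr]; simp [SimpleGraph.Walk.support_cons, SimpleGraph.Walk.start_mem_support]
        rw [SimpleGraph.Walk.support_reverse, List.mem_reverse] at hw
        simp [SimpleGraph.Walk.support_cons, hw]
      · intro hbw
        apply hnotin
        have : s(y, w) ∈ p.reverse.edges := by rw [hpr]; simp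
        rw [SimpleGraph.Walk.edges_reverse, List.mem_reverse] at this
        subst hbw
        exact this

lemma cycle_two_nbrs {H : SimpleGraph V} {x y : V} {c : H.Walk x x} (hc : c.IsCycle)
    (hy : y ∈ c.support) :
    ∃ u w, u ∈ c.support ∧ w ∈ c.support ∧ u ≠ w ∧ H.Adj y u ∧ H.Adj y w := by
  obtain ⟨u, w, hu, hw, huw, hyu, hyw⟩ := cycle_two_nbrs_start (hc.rotate hy)
  have hmem : ∀ z, z ≠ y → z ∈ (c.rotate y hy).support → z ∈ c.support := by
    intro z hzy hz
    rw [SimpleGraph.Walk.support_eq_cons] at hz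
    rcases List.mem_cons.1 hz with h | h
    · exact absurd h hzy
    · have := ((SimpleGraph.Walk.support_rotate c y hy).mem_iff).1 h
      rw [SimpleGraph.Walk.support_eq_cons]
      exact List.mem_cons_of_mem _ this
  exact ⟨u, w, hmem u hyu.ne' hu, hmem w hyw.ne' hw, huw, hyu, hyw⟩

lemma shed_acyclic {H : SimpleGraph V} (g : V → ℕ)
    (hg : ∀ x y, H.Adj x y → g x ≠ g y)
    (h1 : ∀ x y z, H.Adj x y → H.Adj x z → y ≠ z → g x < g y → g x < g z → False) :
    H.IsAcyclic := by
  intro x c hc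
  have hne : c.support.toFinset.Nonempty := ⟨x, by simp [SimpleGraph.Walk.start_mem_support]⟩
  obtain ⟨m, hmmem, hmin⟩ := Finset.exists_min_image c.support.toFinset g hne
  rw [List.mem_toFinset] at hmmem
  obtain ⟨u, w, hu, hw, huw, hmu, hmw⟩ := cycle_two_nbrs hc hmmem
  have hgu : g m < g u := lt_of_le_of_ne (hmin u (by simpa using hu)) (hg _ _ hmu)
  have hgw : g m < g w := lt_of_le_of_ne (hmin w (by simpa using hw)) (hg _ _ hmw)
  exact h1 m u w hmu hmw huw hgu hgw

/-! ### Restriction of a graph to a finset of vertices -/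

def res (G : SimpleGraph V) (B : Finset V) : SimpleGraph V where
  Adj x y := G.Adj x y ∧ x ∈ B ∧ y ∈ B
  symm := ⟨by rintro x y ⟨h, hx, hy⟩; exact ⟨h.symm, hy, hx⟩⟩
  loopless := ⟨by rintro x ⟨h, -, -⟩; exact G.loopless.irrefl x h⟩

lemma res_adj {G : SimpleGraph V} {B : Finset V} {x y : V} :
    (res G B).Adj x y ↔ G.Adj x y ∧ x ∈ B ∧ y ∈ B := Iff.rfl

lemma ncard_le_two_of_subset_pair {s : Set V} {a b : V} (h : s ⊆ {a, b}) : s.ncard ≤ 2 := by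
  refine le_trans (Set.ncard_le_ncard h (Set.toFinite _)) ?_
  refine le_trans (Set.ncard_insert_le _ _) ?_
  simp [Set.ncard_singleton]

lemma LF_empty (G : SimpleGraph V) : IsLinearForest (res G (∅ : Finset V)) := by
  constructor
  · intro x c hc
    cases c with
    | nil => exact absurd rfl hc.ne_nil
    | cons h p => exact absurd h.2.1 (Finset.notMem_empty _)
  · intro x
    have h : (res G (∅ : Finset V)).neighborSet x = ∅ := by
      ext z
      simp only [SimpleGraph.mem_neighborSet, res_adj, Finset.notMem_empty, false_and,
        and_false, Set.mem_empty_iff_false]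
    rw [h]
    simp

lemma LF_single (G : SimpleGraph V) (v : V) : IsLinearForest (res G ({v} : Finset V)) := by
  constructor
  · intro x c hc
    cases c with
    | nil => exact absurd rfl hc.ne_nil
    | cons h p =>
      obtain ⟨hadj, hx, hy⟩ := h
      rw [mem_singleton] at hx hy
      exact hadj.ne (hx.trans hy.symm)
  · intro x
    refine ncard_le_two_of_subset_pair (a := v) (b := v) ?_
    rintro z ⟨-, -, hz⟩
    simp only [mem_singleton] at hz
    simp [hz]

lemma LF_pair (G : SimpleGraph V) (v u : V) : IsLinearForest (res G ({v, u} : Finset V)) := by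
  constructor
  · refine shed_acyclic (fun z => if z = v then 0 else 1) ?_ ?_
    · rintro x y ⟨hadj, hx, hy⟩
      have hne := hadj.ne
      simp only [mem_insert, mem_singleton] at hx hy
      rcases hx with rfl | rfl <;> rcases hy with rfl | rfl <;> (try simp_all) <;>
        (try split_ifs at *) <;> (try simp_all) <;> (try omega) <;> try exact hadj.ne'
    · rintro x y z ⟨hxy, hx, hy⟩ ⟨hxz, -, hz⟩ hyz h1 h2
      simp only [mem_insert, mem_singleton] at hx hy hz
      have := hxy.ne
      have := hxz.ne
      rcases hx with rfl | rfl <;> rcases hy with rfl | rfl <;> rcases hz with rfl | rfl <;>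
        (try simp_all) <;> (try split_ifs at *) <;> simp_all <;> try omega
  · intro x
    refine ncard_le_two_of_subset_pair (a := v) (b := u) ?_
    rintro z ⟨-, -, hz⟩
    simpa using hz

/-- Induced path on three vertices `v - u - w` (with `v,w` non-adjacent). -/
lemma LF_triple (G : SimpleGraph V) (v u w : V) (hvw : ¬G.Adj v w)
    (hvu : v ≠ u) (hvw' : v ≠ w) (huw : u ≠ w) :
    IsLinearForest (res G ({v, u, w} : Finset V)) := by
  constructor
  · refine shed_acyclic (fun z => if z = v then 0 else if z = u then 1 else 2) ?_ ?_
    · rintro x y ⟨hadj, hx, hy⟩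
      have hne := hadj.ne
      have h2 : ¬G.Adj w v := fun hh => hvw hh.symm
      simp only [mem_insert, mem_singleton] at hx hy
      rcases hx with rfl | rfl | rfl <;> rcases hy with rfl | rfl | rfl <;> (try simp_all) <;>
        (try split_ifs at *) <;> (try simp_all) <;> (try omega) <;> try exact hadj.ne'
    · rintro x y z ⟨hxy, hx, hy⟩ ⟨hxz, -, hz⟩ hyz h1 h2
      have hxy' := hxy.ne
      have hxz' := hxz.ne
      have hwv : ¬G.Adj w v := fun hh => hvw hh.symm
      simp only [mem_insert, mem_singleton] at hx hy hz
      rcases hx with rfl | rfl | rfl <;> rcases hy with rfl | rfl | rfl <;>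
        rcases hz with rfl | rfl | rfl <;> (try simp_all) <;> (try split_ifs at *) <;>
        simp_all <;> try omega
  · intro x
    by_cases hx : x = u
    · subst hx
      refine ncard_le_two_of_subset_pair (a := v) (b := w) ?_
      rintro z ⟨hadj, -, hz⟩
      simp only [mem_insert, mem_singleton] at hz
      rcases hz with rfl | rfl | rfl
      · simp
      · exact absurd rfl hadj.ne
      · simp
    · refine ncard_le_two_of_subset_pair (a := u) (b := u) ?_
      rintro z ⟨hadj, hxx, hz⟩
      simp only [mem_insert, mem_singleton] at hz hxx
      rcases hxx with rfl | rfl | rfl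
      · rcases hz with rfl | rfl | rfl
        · exact absurd rfl hadj.ne
        · simp
        · exact absurd hadj hvw
      · exact absurd rfl hx
      · rcases hz with rfl | rfl | rfl
        · exact absurd hadj (fun hh => hvw hh.symm)
        · simp
        · exact absurd rfl hadj.ne

/-- Induced path on four vertices `p - q - r - s`. -/
lemma LF_quad (G : SimpleGraph V) (p q r s : V)
    (hpr : ¬G.Adj p r) (hps : ¬G.Adj p s) (hqs : ¬G.Adj q s)
    (hpq : p ≠ q) (hpr' : p ≠ r) (hps' : p ≠ s) (hqr : q ≠ r) (hqs' : q ≠ s) (hrs : r ≠ s) :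
    IsLinearForest (res G ({p, q, r, s} : Finset V)) := by
  have hrp : ¬G.Adj r p := fun hh => hpr hh.symm
  have hsp : ¬G.Adj s p := fun hh => hps hh.symm
  have hsq : ¬G.Adj s q := fun hh => hqs hh.symm
  constructor
  · refine shed_acyclic (fun z => if z = p then 0 else if z = q then 1 else if z = r then 2
      else 3) ?_ ?_
    · rintro x y ⟨hadj, hx, hy⟩
      have hne := hadj.ne
      simp only [mem_insert, mem_singleton] at hx hy
      rcases hx with rfl | rfl | rfl | rfl <;> rcases hy with rfl | rfl | rfl | rfl <;>
        (try simp_all) <;> (try split_ifs at *) <;> (try simp_all) <;> (try omega) <;> try exact hadj.ne'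
    · rintro x y z ⟨hxy, hx, hy⟩ ⟨hxz, -, hz⟩ hyz h1 h2
      have hxy' := hxy.ne
      have hxz' := hxz.ne
      simp only [mem_insert, mem_singleton] at hx hy hz
      rcases hx with rfl | rfl | rfl | rfl <;> rcases hy with rfl | rfl | rfl | rfl <;>
        rcases hz with rfl | rfl | rfl | rfl <;> (try simp_all) <;> (try split_ifs at *) <;>
        simp_all <;> try omega
  · intro x
    by_cases hx1 : x = q
    · subst hx1
      refine ncard_le_two_of_subset_pair (a := p) (b := r) ?_
      rintro z ⟨hadj, -, hz⟩
      simp only [mem_insert, mem_singleton] at hz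
      rcases hz with rfl | rfl | rfl | rfl
      · simp
      · exact absurd rfl hadj.ne
      · simp
      · exact absurd hadj hqs
    · by_cases hx2 : x = r
      · subst hx2
        refine ncard_le_two_of_subset_pair (a := q) (b := s) ?_
        rintro z ⟨hadj, -, hz⟩
        simp only [mem_insert, mem_singleton] at hz
        rcases hz with rfl | rfl | rfl | rfl
        · exact absurd hadj hrp
        · simp
        · exact absurd rfl hadj.ne
        · simp
      · refine ncard_le_two_of_subset_pair (a := q) (b := r) ?_
        rintro z ⟨hadj, hxx, hz⟩
        simp only [mem_insert, mem_singleton] at hz hxx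
        rcases hxx with rfl | rfl | rfl | rfl
        · rcases hz with rfl | rfl | rfl | rfl
          · exact absurd rfl hadj.ne
          · simp
          · exact absurd hadj hpr
          · exact absurd hadj hps
        · exact absurd rfl hx1
        · exact absurd rfl hx2
        · rcases hz with rfl | rfl | rfl | rfl
          · exact absurd hadj hsp
          · exact absurd hadj hsq
          · simp
          · exact absurd rfl hadj.ne

/-- Two vertex-disjoint linear forests make a linear forest. -/
lemma LF_sup {H1 H2 : SimpleGraph V} (h1 : IsLinearForest H1) (h2 : IsLinearForest H2)
    (hd : ∀ x, (∃ y, H1.Adj x y) → (∃ z, H2.Adj x z) → False) :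
    IsLinearForest (H1 ⊔ H2) := by
  have edges_left : ∀ {a b : V} (w : (H1 ⊔ H2).Walk a b), (∃ y, H1.Adj a y) →
      ∀ e ∈ w.edges, e ∈ H1.edgeSet := by
    intro a b w
    induction w with
    | nil => intro _ e he; simp at he
    | @cons a c b h p ih =>
      intro ha e he
      rcases h with h | h
      · rw [SimpleGraph.Walk.edges_cons, List.mem_cons] at he
        rcases he with rfl | he
        · exact h
        · exact ih ⟨a, h.symm⟩ e he
      · exact absurd ⟨c, h⟩ (hd a ha)
  have edges_right : ∀ {a b : V} (w : (H1 ⊔ H2).Walk a b), (∃ y, H2.Adj a y) →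
      ∀ e ∈ w.edges, e ∈ H2.edgeSet := by
    intro a b w
    induction w with
    | nil => intro _ e he; simp at he
    | @cons a c b h p ih =>
      intro ha e he
      rcases h with h | h
      · exact absurd ha (hd a ⟨c, h⟩)
      · rw [SimpleGraph.Walk.edges_cons, List.mem_cons] at he
        rcases he with rfl | he
        · exact h
        · exact ih ⟨a, h.symm⟩ e he
  constructor
  · intro x c hc
    cases c with
    | nil => exact absurd rfl hc.ne_nil
    | @cons _ b _ h p =>
      rcases h with h | h
      · have hsub := edges_left (SimpleGraph.Walk.cons (Or.inl h) p) ⟨b, h⟩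
        exact h1.1 ((SimpleGraph.Walk.cons (Or.inl h) p).transfer H1 hsub) (hc.transfer hsub)
      · have hsub := edges_right (SimpleGraph.Walk.cons (Or.inr h) p) ⟨b, h⟩
        exact h2.1 ((SimpleGraph.Walk.cons (Or.inr h) p).transfer H2 hsub) (hc.transfer hsub)
  · intro v
    by_cases hv : ∃ y, H1.Adj v y
    · have h : (H1 ⊔ H2).neighborSet v = H1.neighborSet v := by
        ext z
        simp only [SimpleGraph.mem_neighborSet, SimpleGraph.sup_adj]
        exact ⟨fun hz => hz.elim id fun hh => absurd ⟨z, hh⟩ (hd v hv), Or.inl⟩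
      rw [h]; exact h1.2 v
    · have h : (H1 ⊔ H2).neighborSet v = H2.neighborSet v := by
        ext z
        simp only [SimpleGraph.mem_neighborSet, SimpleGraph.sup_adj]
        exact ⟨fun hz => hz.elim (fun hh => absurd ⟨z, hh⟩ hv) id, Or.inr⟩
      rw [h]; exact h2.2 v

/-! ### Degrees within a finset -/

def dW (G : SimpleGraph V) [DecidableRel G.Adj] (W : Finset V) (v : V) : ℕ :=
  (W.filter fun u => G.Adj v u).card

variable {G : SimpleGraph V} [DecidableRel G.Adj]

lemma dW_mono {W' W : Finset V} (h : W' ⊆ W) (v : V) : dW G W' v ≤ dW G W v :=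
  Finset.card_le_card (Finset.filter_subset_filter _ h)

lemma dW_pos {W : Finset V} {v y : V} (hy : y ∈ W) (h : G.Adj v y) : 1 ≤ dW G W v :=
  Finset.card_pos.2 ⟨y, Finset.mem_filter.2 ⟨hy, h⟩⟩

lemma deg0_no_nbr {W : Finset V} {v : V} (h : dW G W v = 0) :
    ∀ y ∈ W, ¬G.Adj v y := by
  intro y hy hadj
  have := dW_pos hy hadj
  omega

lemma deg1_struct {W : Finset V} {v : V} (h : dW G W v = 1) :
    ∃ u, u ∈ W ∧ G.Adj v u ∧ ∀ y ∈ W, G.Adj v y → y = u := by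
  obtain ⟨u, hu⟩ := Finset.card_eq_one.1 h
  have humem : u ∈ W.filter fun z => G.Adj v z := by rw [hu]; exact Finset.mem_singleton_self u
  rw [Finset.mem_filter] at humem
  refine ⟨u, humem.1, humem.2, ?_⟩
  intro y hyW hadj
  have hy : y ∈ W.filter fun z => G.Adj v z := Finset.mem_filter.2 ⟨hyW, hadj⟩
  rw [hu, Finset.mem_singleton] at hy
  exact hy

lemma deg2_other {W : Finset V} {v a : V} (h : dW G W v = 2) (ha : a ∈ W) (haj : G.Adj v a) :
    ∃ b, b ∈ W ∧ b ≠ a ∧ G.Adj v b := by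
  have hmem : a ∈ W.filter fun z => G.Adj v z := Finset.mem_filter.2 ⟨ha, haj⟩
  have hcard : ((W.filter fun z => G.Adj v z).erase a).card = 1 := by
    rw [Finset.card_erase_of_mem hmem]
    unfold dW at h
    omega
  obtain ⟨b, hb⟩ := Finset.card_eq_one.1 hcard
  have hbmem : b ∈ (W.filter fun z => G.Adj v z).erase a := by
    rw [hb]; exact Finset.mem_singleton_self b
  have hbne := Finset.ne_of_mem_erase hbmem
  have hbm := Finset.mem_of_mem_erase hbmem
  rw [Finset.mem_filter] at hbm
  exact ⟨b, hbm.1, hbne, hbm.2⟩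

lemma deg2_unique {W : Finset V} {v c d : V} (h : dW G W v = 2) (hcd : c ≠ d)
    (hc : c ∈ W) (hd : d ∈ W) (hjc : G.Adj v c) (hjd : G.Adj v d) :
    ∀ y ∈ W, G.Adj v y → y = c ∨ y = d := by
  have hsub : ({c, d} : Finset V) ⊆ W.filter fun z => G.Adj v z := by
    intro z hz
    rcases Finset.mem_insert.1 hz with rfl | hz
    · exact Finset.mem_filter.2 ⟨hc, hjc⟩
    · rw [Finset.mem_singleton] at hz; subst hz; exact Finset.mem_filter.2 ⟨hd, hjd⟩
  have heq := Finset.eq_of_subset_of_card_le hsub (by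
    unfold dW at h
    rw [h, Finset.card_pair hcd])
  intro y hyW hadj
  have hy : y ∈ W.filter fun z => G.Adj v z := Finset.mem_filter.2 ⟨hyW, hadj⟩
  rw [← heq] at hy
  rcases Finset.mem_insert.1 hy with rfl | hy
  · exact Or.inl rfl
  · exact Or.inr (Finset.mem_singleton.1 hy)

/-! ### Arithmetic facts about the weight function -/

variable {f : ℕ → ℝ}

section ffacts
variable (hf0 : f 0 = 1) (hf1 : f 1 = 5/6) (hf : ∀ d, 2 ≤ d → f d = 2 / ((d : ℝ) + 1))
include hf0 hf1 hf

lemma f_mono_small {i j : ℕ} (hij : i ≤ j) (hj : j ≤ 2) : f j ≤ f i := by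
  have h2 := hf 2 le_rfl
  interval_cases j <;> interval_cases i <;> norm_num [hf0, hf1, h2]

omit hf0 in
lemma f_le_56 {m : ℕ} (h1 : 1 ≤ m) (h2 : m ≤ 2) : f m ≤ 5/6 := by
  have hv2 := hf 2 le_rfl
  interval_cases m <;> norm_num [hf1, hv2]

lemma f_inc_bound {m D : ℕ} (h1 : 1 ≤ m) (hmD : m ≤ D) (hD : 3 ≤ D) :
    f m + 2 / ((D : ℝ) * ((D : ℝ) + 1)) ≤ f (m - 1) := by
  have hD' : (3 : ℝ) ≤ (D : ℝ) := by exact_mod_cast hD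
  have hDpos : (0 : ℝ) < (D : ℝ) := by linarith
  have hD1 : (0 : ℝ) < (D : ℝ) + 1 := by linarith
  have hprod : (12 : ℝ) ≤ (D : ℝ) * ((D : ℝ) + 1) := by nlinarith
  have hprodpos : (0 : ℝ) < (D : ℝ) * ((D : ℝ) + 1) := by nlinarith
  have hc : 2 / ((D : ℝ) * ((D : ℝ) + 1)) ≤ 1 / 6 := by
    rw [div_le_div_iff₀ hprodpos (by norm_num)]
    nlinarith
  match m with
  | 1 => simp only [Nat.sub_self]; rw [hf1, hf0]; linarith
  | 2 =>
    have : (2 : ℕ) - 1 = 1 := rfl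
    rw [this, hf 2 le_rfl, hf1]
    norm_num
    linarith
  | (k + 3) =>
    have hk1 : (k + 3 : ℕ) - 1 = k + 2 := rfl
    rw [hk1, hf (k + 3) (by omega), hf (k + 2) (by omega)]
    have hxD : ((k : ℝ) + 3) ≤ (D : ℝ) := by
      have : ((k + 3 : ℕ) : ℝ) ≤ (D : ℝ) := by exact_mod_cast hmD
      push_cast at this
      linarith
    have hx0 : (0 : ℝ) < (k : ℝ) + 3 := by positivity
    have hx1 : (0 : ℝ) < (k : ℝ) + 3 + 1 := by positivity
    push_cast
    have key : 2 / ((D : ℝ) * ((D : ℝ) + 1)) ≤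
        2 / (((k : ℝ) + 3) * ((k : ℝ) + 3 + 1)) := by
      rw [div_le_div_iff₀ hprodpos (by positivity)]
      nlinarith
    have expand : 2 / (((k : ℝ) + 3) * ((k : ℝ) + 3 + 1)) =
        2 / ((k : ℝ) + 3) - 2 / ((k : ℝ) + 3 + 1) := by
      field_simp
      ring
    have final : 2 / ((k : ℝ) + 3 + 1) + 2 / ((D : ℝ) * ((D : ℝ) + 1)) ≤ 2 / ((k : ℝ) + 3) := by
      rw [expand] at key
      linarith
    calc 2 / ((k : ℝ) + 3 + 1) + 2 / ((D : ℝ) * ((D : ℝ) + 1))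
        ≤ 2 / ((k : ℝ) + 3) := final
      _ = 2 / ((k : ℝ) + 2 + 1) := by ring_nf

end ffacts

/-! ### The deletion engine -/

lemma engine {W U B : Finset V}
    (hUW : U ⊆ W) (hBU : B ⊆ U)
    (hi : ∀ b ∈ B, ∀ y ∈ W, G.Adj b y → y ∈ U)
    (hii : IsLinearForest (res G B))
    (hiii : ∑ x ∈ U, f (dW G W x) ≤ (B.card : ℝ))
    (hiv : ∀ y ∈ W \ U, f (dW G W y) ≤ f (dW G (W \ U) y))
    (prev : ∃ S, S ⊆ W \ U ∧ IsLinearForest (res G S) ∧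
      ∑ v ∈ W \ U, f (dW G (W \ U) v) ≤ (S.card : ℝ)) :
    ∃ S, S ⊆ W ∧ IsLinearForest (res G S) ∧ ∑ v ∈ W, f (dW G W v) ≤ (S.card : ℝ) := by
  obtain ⟨S', hS'sub, hS'LF, hS'sum⟩ := prev
  have hdisj : Disjoint B S' := by
    rw [Finset.disjoint_left]
    intro a haB haS'
    exact (Finset.mem_sdiff.1 (hS'sub haS')).2 (hBU haB)
  refine ⟨B ∪ S', ?_, ?_, ?_⟩
  · intro a ha
    rcases Finset.mem_union.1 ha with h | h
    · exact hUW (hBU h)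
    · exact Finset.sdiff_subset (hS'sub h)
  · have hEq : res G (B ∪ S') = res G B ⊔ res G S' := by
      ext x y
      constructor
      · rintro ⟨hadj, hx, hy⟩
        rcases Finset.mem_union.1 hx with hxB | hxS
        · rcases Finset.mem_union.1 hy with hyB | hyS
          · exact Or.inl ⟨hadj, hxB, hyB⟩
          · exfalso
            have hyW : y ∈ W := Finset.sdiff_subset (hS'sub hyS)
            have : y ∈ U := hi x hxB y hyW hadj
            exact (Finset.mem_sdiff.1 (hS'sub hyS)).2 this
        · rcases Finset.mem_union.1 hy with hyB | hyS
          · exfalso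
            have hxW : x ∈ W := Finset.sdiff_subset (hS'sub hxS)
            have : x ∈ U := hi y hyB x hxW hadj.symm
            exact (Finset.mem_sdiff.1 (hS'sub hxS)).2 this
          · exact Or.inr ⟨hadj, hxS, hyS⟩
      · rintro (⟨hadj, hx, hy⟩ | ⟨hadj, hx, hy⟩)
        · exact ⟨hadj, Finset.mem_union_left _ hx, Finset.mem_union_left _ hy⟩
        · exact ⟨hadj, Finset.mem_union_right _ hx, Finset.mem_union_right _ hy⟩
    rw [hEq]
    apply LF_sup hii hS'LF
    rintro x ⟨y, hy⟩ ⟨z, hz⟩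
    have hxB : x ∈ B := hy.2.1
    have hxS : x ∈ S' := hz.2.1
    exact (Finset.mem_sdiff.1 (hS'sub hxS)).2 (hBU hxB)
  · have hsplit : (∑ v ∈ W \ U, f (dW G W v)) + ∑ v ∈ U, f (dW G W v)
        = ∑ v ∈ W, f (dW G W v) := Finset.sum_sdiff hUW
    have h1 : ∑ v ∈ W \ U, f (dW G W v) ≤ ∑ v ∈ W \ U, f (dW G (W \ U) v) :=
      Finset.sum_le_sum hiv
    have hcard : ((B ∪ S').card : ℝ) = (B.card : ℝ) + (S'.card : ℝ) := by
      rw [Finset.card_union_of_disjoint hdisj]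
      push_cast
      ring
    rw [← hsplit, hcard]
    linarith

lemma hiv_of_deg2 (hf0 : f 0 = 1) (hf1 : f 1 = 5/6)
    (hf : ∀ d, 2 ≤ d → f d = 2 / ((d : ℝ) + 1))
    {W U : Finset V} (hΔ : ∀ w ∈ W, dW G W w ≤ 2) :
    ∀ y ∈ W \ U, f (dW G W y) ≤ f (dW G (W \ U) y) := by
  intro y hy
  have hyW : y ∈ W := (Finset.mem_sdiff.1 hy).1
  exact f_mono_small hf0 hf1 hf (dW_mono Finset.sdiff_subset y) (hΔ y hyW)

/-! ### Small sums and cards -/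

lemma sum_triple {g : V → ℝ} {a b c : V} (hab : a ≠ b) (hac : a ≠ c) (hbc : b ≠ c) :
    ∑ x ∈ ({a, b, c} : Finset V), g x = g a + g b + g c := by
  rw [Finset.sum_insert (by simp [hab, hac]), Finset.sum_pair hbc]
  ring

lemma sum_quad {g : V → ℝ} {a b c d : V} (hab : a ≠ b) (hac : a ≠ c) (had : a ≠ d)
    (hbc : b ≠ c) (hbd : b ≠ d) (hcd : c ≠ d) :
    ∑ x ∈ ({a, b, c, d} : Finset V), g x = g a + g b + g c + g d := by
  rw [Finset.sum_insert (by simp [hab, hac, had]),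
    Finset.sum_insert (by simp [hbc, hbd]), Finset.sum_pair hcd]
  ring

lemma card_triple {a b c : V} (hab : a ≠ b) (hac : a ≠ c) (hbc : b ≠ c) :
    ({a, b, c} : Finset V).card = 3 := by
  rw [Finset.card_insert_of_notMem (by simp [hab, hac]), Finset.card_pair hbc]

lemma card_quad {a b c d : V} (hab : a ≠ b) (hac : a ≠ c) (had : a ≠ d)
    (hbc : b ≠ c) (hbd : b ≠ d) (hcd : c ≠ d) :
    ({a, b, c, d} : Finset V).card = 4 := by
  rw [Finset.card_insert_of_notMem (by simp [hab, hac, had]),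
    Finset.card_insert_of_notMem (by simp [hbc, hbd]), Finset.card_pair hcd]

end LinForestAux

namespace LinForestAux

open SimpleGraph Finset

variable {V : Type} [Fintype V] [DecidableEq V] {G : SimpleGraph V} [DecidableRel G.Adj]
variable {f : ℕ → ℝ}

lemma card_le_six (a b c d e g : V) : ({a, b, c, d, e, g} : Finset V).card ≤ 6 := by
  refine le_trans (Finset.card_insert_le _ _) (Nat.succ_le_succ ?_)
  refine le_trans (Finset.card_insert_le _ _) (Nat.succ_le_succ ?_)
  refine le_trans (Finset.card_insert_le _ _) (Nat.succ_le_succ ?_)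
  refine le_trans (Finset.card_insert_le _ _) (Nat.succ_le_succ ?_)
  refine le_trans (Finset.card_insert_le _ _) (Nat.succ_le_succ ?_)
  simp

theorem main (hf0 : f 0 = 1) (hf1 : f 1 = 5/6)
    (hf : ∀ d, 2 ≤ d → f d = 2 / ((d : ℝ) + 1)) (W : Finset V) :
    ∃ S, S ⊆ W ∧ IsLinearForest (res G S) ∧ ∑ v ∈ W, f (dW G W v) ≤ (S.card : ℝ) := by
  induction W using Finset.strongInduction with
  | _ W IH =>
  rcases Finset.eq_empty_or_nonempty W with rfl | hWne
  · exact ⟨∅, Finset.Subset.refl _, LF_empty G, by simp⟩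
  by_cases h3 : ∃ v ∈ W, 3 ≤ dW G W v
  · -- Case: some vertex of degree ≥ 3.  Delete a maximum-degree vertex.
    obtain ⟨v, hvW, hvmax⟩ := Finset.exists_max_image W (dW G W) hWne
    obtain ⟨v3, hv3W, hv3⟩ := h3
    have hD3 : 3 ≤ dW G W v := le_trans hv3 (hvmax v3 hv3W)
    obtain ⟨S, hSW', hSLF, hSsum⟩ := IH (W.erase v) (Finset.erase_ssubset hvW)
    refine ⟨S, hSW'.trans (Finset.erase_subset _ _), hSLF, ?_⟩
    have hkey : ∀ w ∈ W.erase v,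
        f (dW G W w) + (if G.Adj v w then 2 / ((dW G W v : ℝ) * ((dW G W v : ℝ) + 1)) else 0)
          ≤ f (dW G (W.erase v) w) := by
      intro w hwW'
      have hwW : w ∈ W := Finset.mem_of_mem_erase hwW'
      by_cases hadj : G.Adj v w
      · have hvmem : v ∈ W.filter fun u => G.Adj w u := Finset.mem_filter.2 ⟨hvW, hadj.symm⟩
        have hdrop : dW G (W.erase v) w = dW G W w - 1 := by
          unfold dW
          rw [Finset.filter_erase, Finset.card_erase_of_mem hvmem]
        have hm1 : 1 ≤ dW G W w := dW_pos hvW hadj.symm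
        have hmD : dW G W w ≤ dW G W v := hvmax w hwW
        have hb := f_inc_bound hf0 hf1 hf hm1 hmD hD3
        rw [hdrop, if_pos hadj]
        exact hb
      · have heqd : dW G (W.erase v) w = dW G W w := by
          unfold dW
          rw [Finset.filter_erase, Finset.erase_eq_of_notMem]
          intro hmem
          exact hadj (Finset.mem_filter.1 hmem).2.symm
        rw [heqd, if_neg hadj]
        simp
    have hsum := Finset.sum_le_sum hkey
    rw [Finset.sum_add_distrib] at hsum
    have hTeq : ((W.erase v).filter fun w => G.Adj v w) = W.filter fun w => G.Adj v w := by
      rw [Finset.filter_erase, Finset.erase_eq_of_notMem]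
      intro hmem
      exact G.loopless.irrefl v (Finset.mem_filter.1 hmem).2
    have hTsum : (∑ w ∈ W.erase v,
        (if G.Adj v w then 2 / ((dW G W v : ℝ) * ((dW G W v : ℝ) + 1)) else 0))
        = (dW G W v : ℝ) * (2 / ((dW G W v : ℝ) * ((dW G W v : ℝ) + 1))) := by
      rw [← Finset.sum_filter, hTeq, Finset.sum_const, nsmul_eq_mul]
      rfl
    have hfD : f (dW G W v) ≤ (dW G W v : ℝ) * (2 / ((dW G W v : ℝ) * ((dW G W v : ℝ) + 1))) := by
      rw [hf (dW G W v) (by omega)]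
      have hD' : (3 : ℝ) ≤ ((dW G W v : ℕ) : ℝ) := by exact_mod_cast hD3
      have hD0 : ((dW G W v : ℕ) : ℝ) ≠ 0 := by linarith
      have hD1 : ((dW G W v : ℕ) : ℝ) + 1 ≠ 0 := by linarith
      have heq : ((dW G W v : ℕ) : ℝ) * (2 / (((dW G W v : ℕ) : ℝ) * (((dW G W v : ℕ) : ℝ) + 1)))
          = 2 / (((dW G W v : ℕ) : ℝ) + 1) := by
        field_simp
      rw [heq]
    have htotal : ∑ w ∈ W, f (dW G W w) = f (dW G W v) + ∑ w ∈ W.erase v, f (dW G W w) :=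
      (Finset.add_sum_erase W _ hvW).symm
    rw [hTsum] at hsum
    rw [htotal]
    linarith
  · push_neg at h3
    have hΔ : ∀ w ∈ W, dW G W w ≤ 2 := fun w hw => by have := h3 w hw; omega
    by_cases h0 : ∃ v ∈ W, dW G W v = 0
    · -- isolated vertex
      obtain ⟨v, hvW, hv0⟩ := h0
      have hUW : ({v} : Finset V) ⊆ W := Finset.singleton_subset_iff.2 hvW
      refine engine (B := {v}) hUW (Finset.Subset.refl _) ?_ (LF_single G v) ?_
        (hiv_of_deg2 hf0 hf1 hf hΔ)
        (IH _ (Finset.sdiff_ssubset hUW ⟨v, Finset.mem_singleton_self v⟩))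
      · rintro b hb y hyW hadj
        rw [Finset.mem_singleton] at hb; subst hb
        exact absurd hadj (deg0_no_nbr hv0 y hyW)
      · rw [Finset.sum_singleton, hv0, hf0]
        simp
    by_cases h1 : ∃ v ∈ W, dW G W v = 1
    · -- vertex of degree 1
      obtain ⟨v, hvW, hv1⟩ := h1
      obtain ⟨u, huW, hvu_adj, hvu_uniq⟩ := deg1_struct hv1
      have hvu_ne : v ≠ u := hvu_adj.ne
      have hu_pos : 1 ≤ dW G W u := dW_pos hvW hvu_adj.symm
      have hu_le := hΔ u huW
      by_cases hu1 : dW G W u = 1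
      · -- isolated edge v-u
        obtain ⟨u', hu'W, huu', huniq⟩ := deg1_struct hu1
        have hu'v : u' = v := (huniq v hvW hvu_adj.symm).symm
        rw [hu'v] at huniq
        have hUW : ({v, u} : Finset V) ⊆ W := by
          intro z hz
          rcases Finset.mem_insert.1 hz with rfl | hz
          · exact hvW
          · rw [Finset.mem_singleton] at hz; subst hz; exact huW
        refine engine (B := {v, u}) hUW (Finset.Subset.refl _) ?_ (LF_pair G v u) ?_
          (hiv_of_deg2 hf0 hf1 hf hΔ) (IH _ (Finset.sdiff_ssubset hUW ⟨v, by simp⟩))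
        · rintro b hb y hyW hadj
          rcases Finset.mem_insert.1 hb with rfl | hb
          · have := hvu_uniq y hyW hadj; simp [this]
          · rw [Finset.mem_singleton] at hb; subst hb
            have := huniq y hyW hadj; simp [this]
        · rw [Finset.sum_pair hvu_ne, hv1, hu1, hf1, Finset.card_pair hvu_ne]
          norm_num
      · have hu2 : dW G W u = 2 := by omega
        obtain ⟨w, hwW, hwv, huw_adj⟩ := deg2_other hu2 hvW hvu_adj.symm
        have huw_ne : u ≠ w := huw_adj.ne
        have hw_uniq := deg2_unique hu2 (Ne.symm hwv) hvW hwW hvu_adj.symm huw_adj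
        have hvw_nonadj : ¬G.Adj v w := by
          intro hadj
          exact huw_ne (hvu_uniq w hwW hadj).symm
        have hw_pos : 1 ≤ dW G W w := dW_pos huW huw_adj.symm
        have hw_le := hΔ w hwW
        by_cases hw1 : dW G W w = 1
        · -- path v-u-w, all deleted
          obtain ⟨w', hw'W, hww', hwuniq⟩ := deg1_struct hw1
          have hw'u : w' = u := (hwuniq u huW huw_adj.symm).symm
          rw [hw'u] at hwuniq
          have hUW : ({v, u, w} : Finset V) ⊆ W := by
            intro z hz
            rcases Finset.mem_insert.1 hz with rfl | hz
            · exact hvW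
            rcases Finset.mem_insert.1 hz with rfl | hz
            · exact huW
            · rw [Finset.mem_singleton] at hz; subst hz; exact hwW
          refine engine (B := {v, u, w}) hUW (Finset.Subset.refl _) ?_
            (LF_triple G v u w hvw_nonadj hvu_ne (Ne.symm hwv) huw_ne) ?_
            (hiv_of_deg2 hf0 hf1 hf hΔ) (IH _ (Finset.sdiff_ssubset hUW ⟨v, by simp⟩))
          · rintro b hb y hyW hadj
            rcases Finset.mem_insert.1 hb with rfl | hb
            · have := hvu_uniq y hyW hadj; simp [this]
            rcases Finset.mem_insert.1 hb with rfl | hb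
            · rcases hw_uniq y hyW hadj with rfl | rfl <;> simp
            · rw [Finset.mem_singleton] at hb; subst hb
              have := hwuniq y hyW hadj; simp [this]
          · rw [sum_triple hvu_ne (Ne.symm hwv) huw_ne, hv1, hu2, hw1, hf1, hf 2 le_rfl,
              card_triple hvu_ne (Ne.symm hwv) huw_ne]
            norm_num
        · have hw2 : dW G W w = 2 := by omega
          obtain ⟨x, hxW, hxu, hwx_adj⟩ := deg2_other hw2 huW huw_adj.symm
          have hxw : x ≠ w := hwx_adj.ne'
          have hxv : x ≠ v := by
            intro h; subst h
            exact hvw_nonadj hwx_adj.symm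
          have hwx_uniq := deg2_unique hw2 (Ne.symm hxu) huW hxW huw_adj.symm hwx_adj
          have hUW : ({v, u, w, x} : Finset V) ⊆ W := by
            intro z hz
            rcases Finset.mem_insert.1 hz with rfl | hz
            · exact hvW
            rcases Finset.mem_insert.1 hz with rfl | hz
            · exact huW
            rcases Finset.mem_insert.1 hz with rfl | hz
            · exact hwW
            · rw [Finset.mem_singleton] at hz; subst hz; exact hxW
          refine engine (B := {v, u, w}) hUW ?_ ?_
            (LF_triple G v u w hvw_nonadj hvu_ne (Ne.symm hwv) huw_ne) ?_
            (hiv_of_deg2 hf0 hf1 hf hΔ) (IH _ (Finset.sdiff_ssubset hUW ⟨v, by simp⟩))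
          · intro z hz
            simp only [Finset.mem_insert, Finset.mem_singleton] at hz ⊢
            tauto
          · rintro b hb y hyW hadj
            rcases Finset.mem_insert.1 hb with rfl | hb
            · have := hvu_uniq y hyW hadj; simp [this]
            rcases Finset.mem_insert.1 hb with rfl | hb
            · rcases hw_uniq y hyW hadj with rfl | rfl <;> simp
            · rw [Finset.mem_singleton] at hb; subst hb
              rcases hwx_uniq y hyW hadj with rfl | rfl <;> simp
          · have hfx : f (dW G W x) ≤ 5/6 :=
              f_le_56 hf1 hf (dW_pos hwW hwx_adj.symm) (hΔ x hxW)
            rw [sum_quad hvu_ne (Ne.symm hwv) (Ne.symm hxv) huw_ne (Ne.symm hxu) (Ne.symm hxw),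
              hv1, hu2, hw2, hf1, hf 2 le_rfl, card_triple hvu_ne (Ne.symm hwv) huw_ne]
            push_cast
            norm_num
            linarith
    · -- all degrees exactly 2
      have hall2 : ∀ w ∈ W, dW G W w = 2 := by
        intro w hw
        have hle := hΔ w hw
        have h0' : dW G W w ≠ 0 := fun h => h0 ⟨w, hw, h⟩
        have h1' : dW G W w ≠ 1 := fun h => h1 ⟨w, hw, h⟩
        omega
      obtain ⟨v, hvW⟩ := hWne
      have hv2 := hall2 v hvW
      have hpos : 0 < dW G W v := by omega
      obtain ⟨a, ha⟩ := Finset.card_pos.1 hpos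
      rw [Finset.mem_filter] at ha
      obtain ⟨haW, hva⟩ := ha
      obtain ⟨b, hbW, hba, hvb⟩ := deg2_other hv2 haW hva
      have hav : a ≠ v := hva.ne'
      have hbv : b ≠ v := hvb.ne'
      have hvab_uniq := deg2_unique hv2 (Ne.symm hba) haW hbW hva hvb
      by_cases hab_adj : G.Adj a b
      · -- triangle v,a,b
        have ha2 := hall2 a haW
        have ha_uniq := deg2_unique ha2 (show v ≠ b from hvb.ne) hvW hbW hva.symm hab_adj
        have hUW : ({v, a, b} : Finset V) ⊆ W := by
          intro z hz
          rcases Finset.mem_insert.1 hz with rfl | hz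
          · exact hvW
          rcases Finset.mem_insert.1 hz with rfl | hz
          · exact haW
          · rw [Finset.mem_singleton] at hz; subst hz; exact hbW
        refine engine (B := {v, a}) hUW ?_ ?_ (LF_pair G v a) ?_
          (hiv_of_deg2 hf0 hf1 hf hΔ) (IH _ (Finset.sdiff_ssubset hUW ⟨v, by simp⟩))
        · intro z hz
          simp only [Finset.mem_insert, Finset.mem_singleton] at hz ⊢
          tauto
        · rintro p hp y hyW hadj
          rcases Finset.mem_insert.1 hp with rfl | hp
          · rcases hvab_uniq y hyW hadj with rfl | rfl <;> simp
          · rw [Finset.mem_singleton] at hp; subst hp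
            rcases ha_uniq y hyW hadj with rfl | rfl <;> simp
        · rw [sum_triple hva.ne (hvb.ne) (Ne.symm hba), hall2 v hvW, hall2 a haW, hall2 b hbW,
            hf 2 le_rfl, Finset.card_pair hva.ne]
          norm_num
      · -- v's neighbors a,b non-adjacent
        have ha2 := hall2 a haW
        have hb2 := hall2 b hbW
        obtain ⟨a', ha'W, ha'v, haa'⟩ := deg2_other ha2 hvW hva.symm
        obtain ⟨b', hb'W, hb'v, hbb'⟩ := deg2_other hb2 hvW hvb.symm
        have ha'a : a' ≠ a := haa'.ne'
        have ha'b : a' ≠ b := by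
          intro h; subst h; exact hab_adj haa'
        have hb'b : b' ≠ b := hbb'.ne'
        have hb'a : b' ≠ a := by
          intro h; subst h; exact hab_adj hbb'.symm
        have ha_uniq := deg2_unique ha2 (Ne.symm ha'v) hvW ha'W hva.symm haa'
        have hb_uniq := deg2_unique hb2 (Ne.symm hb'v) hvW hb'W hvb.symm hbb'
        have hva'_nonadj : ¬G.Adj v a' := by
          intro h
          rcases hvab_uniq a' ha'W h with h' | h'
          · exact ha'a h'
          · exact ha'b h'
        by_cases ha'b' : a' = b'
        · -- C4-like: U = {v,a,b,a'}, B = path a-v-b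
          subst ha'b'
          have hUW : ({v, a, b, a'} : Finset V) ⊆ W := by
            intro z hz
            rcases Finset.mem_insert.1 hz with rfl | hz
            · exact hvW
            rcases Finset.mem_insert.1 hz with rfl | hz
            · exact haW
            rcases Finset.mem_insert.1 hz with rfl | hz
            · exact hbW
            · rw [Finset.mem_singleton] at hz; subst hz; exact ha'W
          refine engine (B := {a, v, b}) hUW ?_ ?_
            (LF_triple G a v b hab_adj hav (Ne.symm hba) hvb.ne) ?_
            (hiv_of_deg2 hf0 hf1 hf hΔ) (IH _ (Finset.sdiff_ssubset hUW ⟨v, by simp⟩))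
          · intro z hz
            simp only [Finset.mem_insert, Finset.mem_singleton] at hz ⊢
            tauto
          · rintro p hp y hyW hadj
            rcases Finset.mem_insert.1 hp with rfl | hp
            · rcases ha_uniq y hyW hadj with rfl | rfl <;> simp
            rcases Finset.mem_insert.1 hp with rfl | hp
            · rcases hvab_uniq y hyW hadj with rfl | rfl <;> simp
            · rw [Finset.mem_singleton] at hp; subst hp
              rcases hb_uniq y hyW hadj with rfl | rfl <;> simp
          · rw [sum_quad hva.ne hvb.ne (Ne.symm ha'v) (Ne.symm hba) (Ne.symm ha'a)
              (Ne.symm ha'b), hall2 v hvW, hall2 a haW, hall2 b hbW, hall2 a' ha'W,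
              hf 2 le_rfl, card_triple hav (Ne.symm hba) hvb.ne]
            norm_num
        · by_cases ha'badj : G.Adj a' b
          · -- U = {v,a,b,a'}, B = path v-a-a'
            have ha'2 := hall2 a' ha'W
            have ha'_uniq := deg2_unique ha'2 (show a ≠ b from Ne.symm hba) haW hbW
              haa'.symm ha'badj
            have hUW : ({v, a, b, a'} : Finset V) ⊆ W := by
              intro z hz
              rcases Finset.mem_insert.1 hz with rfl | hz
              · exact hvW
              rcases Finset.mem_insert.1 hz with rfl | hz
              · exact haW
              rcases Finset.mem_insert.1 hz with rfl | hz
              · exact hbW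
              · rw [Finset.mem_singleton] at hz; subst hz; exact ha'W
            refine engine (B := {v, a, a'}) hUW ?_ ?_
              (LF_triple G v a a' hva'_nonadj hva.ne (Ne.symm ha'v) (Ne.symm ha'a)) ?_
              (hiv_of_deg2 hf0 hf1 hf hΔ) (IH _ (Finset.sdiff_ssubset hUW ⟨v, by simp⟩))
            · intro z hz
              simp only [Finset.mem_insert, Finset.mem_singleton] at hz ⊢
              tauto
            · rintro p hp y hyW hadj
              rcases Finset.mem_insert.1 hp with rfl | hp
              · rcases hvab_uniq y hyW hadj with rfl | rfl <;> simp
              rcases Finset.mem_insert.1 hp with rfl | hp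
              · rcases ha_uniq y hyW hadj with rfl | rfl <;> simp
              · rw [Finset.mem_singleton] at hp; subst hp
                rcases ha'_uniq y hyW hadj with rfl | rfl <;> simp
            · rw [sum_quad hva.ne hvb.ne (Ne.symm ha'v) (Ne.symm hba) (Ne.symm ha'a)
                (Ne.symm ha'b), hall2 v hvW, hall2 a haW, hall2 b hbW, hall2 a' ha'W,
                hf 2 le_rfl, card_triple hva.ne (Ne.symm ha'v) (Ne.symm ha'a)]
              norm_num
          · -- final case: B = path a'-a-v-b, U adds b' and a''
            have ha'2 := hall2 a' ha'W
            obtain ⟨a'', ha''W, ha''a, ha'a''⟩ := deg2_other ha'2 haW haa'.symm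
            have ha'_uniq := deg2_unique ha'2 (Ne.symm ha''a) haW ha''W haa'.symm ha'a''
            have ha'v_nonadj : ¬G.Adj a' v := fun h => hva'_nonadj h.symm
            have hUW : ({v, a, b, a', b', a''} : Finset V) ⊆ W := by
              intro z hz
              simp only [Finset.mem_insert, Finset.mem_singleton] at hz
              rcases hz with rfl | rfl | rfl | rfl | rfl | rfl
              · exact hvW
              · exact haW
              · exact hbW
              · exact ha'W
              · exact hb'W
              · exact ha''W
            refine engine (B := {a', a, v, b}) hUW ?_ ?_
              (LF_quad G a' a v b ha'v_nonadj ha'badj hab_adj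
                (Ne.symm ha'a).symm ha'v ha'b hav (Ne.symm hba) hvb.ne) ?_
              (hiv_of_deg2 hf0 hf1 hf hΔ) (IH _ (Finset.sdiff_ssubset hUW ⟨v, by simp⟩))
            · intro z hz
              simp only [Finset.mem_insert, Finset.mem_singleton] at hz ⊢
              tauto
            · rintro p hp y hyW hadj
              rcases Finset.mem_insert.1 hp with rfl | hp
              · rcases ha'_uniq y hyW hadj with rfl | rfl <;> simp
              rcases Finset.mem_insert.1 hp with rfl | hp
              · rcases ha_uniq y hyW hadj with rfl | rfl <;> simp
              rcases Finset.mem_insert.1 hp with rfl | hp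
              · rcases hvab_uniq y hyW hadj with rfl | rfl <;> simp
              · rw [Finset.mem_singleton] at hp; subst hp
                rcases hb_uniq y hyW hadj with rfl | rfl <;> simp
            · have hval : ∀ x ∈ ({v, a, b, a', b', a''} : Finset V),
                  f (dW G W x) = 2/3 := by
                intro x hx
                rw [hall2 x (hUW hx), hf 2 le_rfl]
                norm_num
              rw [Finset.sum_congr rfl hval, Finset.sum_const, nsmul_eq_mul,
                card_quad ha'a ha'v ha'b hav (Ne.symm hba) hvb.ne]
              have hc6 : (({v, a, b, a', b', a''} : Finset V).card : ℝ) ≤ 6 := by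
                exact_mod_cast card_le_six v a b a' b' a''
              push_cast
              linarith

end LinForestAux

open LinForestAux in
/-- With f(0) = 1, f(1) = 5/6 and f(d) = 2/(d+1) for d ≥ 2, every graph G has an
induced linear forest with at least ∑_v f(d(v)) vertices. -/
theorem stmt1 (f : ℕ → ℝ) (hf0 : f 0 = 1) (hf1 : f 1 = 5/6)
    (hf : ∀ d, 2 ≤ d → f d = 2 / ((d : ℝ) + 1))
    {V : Type} [Fintype V] [DecidableEq V] (G : SimpleGraph V) [DecidableRel G.Adj] :
    ∃ S : Finset V, IsLinearForest (G.induce (S : Set V)) ∧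
      ∑ v, f (G.degree v) ≤ (S.card : ℝ) := by
  obtain ⟨S, hSW, hLF, hsum⟩ := LinForestAux.main (G := G) hf0 hf1 hf Finset.univ
  refine ⟨S, ⟨?_, ?_⟩, ?_⟩
  · -- acyclicity transfers along the injective hom to `res G S`
    intro x c hc
    have hhom : ∀ {a b : (S : Set V)}, (G.induce (S : Set V)).Adj a b →
        (res G S).Adj a.1 b.1 := by
      intro a b hab
      exact ⟨hab, Finset.mem_coe.1 a.2, Finset.mem_coe.1 b.2⟩
    let φ : G.induce (S : Set V) →g res G S := ⟨Subtype.val, hhom⟩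
    have hinj : Function.Injective φ := Subtype.val_injective
    exact hLF.1 (c.map φ) (hc.map hinj)
  · -- degrees transfer
    intro a
    have himg : (Subtype.val '' ((G.induce (S : Set V)).neighborSet a)) ⊆
        (res G S).neighborSet a.1 := by
      rintro z ⟨b, hb, rfl⟩
      exact ⟨hb, Finset.mem_coe.1 a.2, Finset.mem_coe.1 b.2⟩
    calc ((G.induce (S : Set V)).neighborSet a).ncard
        = (Subtype.val '' ((G.induce (S : Set V)).neighborSet a)).ncard :=
          (Set.ncard_image_of_injective _ Subtype.val_injective).symm
      _ ≤ ((res G S).neighborSet a.1).ncard := Set.ncard_le_ncard himg (Set.toFinite _)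
      _ ≤ 2 := hLF.2 a.1
  · have hdeg : ∀ v, G.degree v = dW G Finset.univ v := by
      intro v
      rw [SimpleGraph.degree, SimpleGraph.neighborFinset_eq_filter]
      rfl
    calc ∑ v, f (G.degree v) = ∑ v ∈ Finset.univ, f (dW G Finset.univ v) := by
          apply Finset.sum_congr rfl
          intro v _
          rw [hdeg]
      _ ≤ (S.card : ℝ) := hsum
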